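/- Let G_n' be the extended welded tree graph of odd depth n, and define v₃ ∈ ℂ^E by: (v₃)_e = (−1/2)^⌈j/2⌉ if e belongs to layer j of the left tree, and (v₃)_e = (−1/2)^⌊j/2⌋ if e belongs to layer j of the right tree (the middle layer being layer n+1 of both trees, on which the two formulas agree since n is odd). Then |ss'⟩ + v₃ is orthogonal to ψ_u for every u ∈ A, and v₃ + |t't⟩ lies in the span of {ψ_u : u ∈ B}. Consequently R_A fixes |ss'⟩ + v₃ + |t't⟩ and R_B(|ss'⟩ + v₃ + |t't⟩) = |ss'⟩ − v₃ − |t't⟩. -/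

import Mathlib

/-!
The welded tree graph is modelled abstractly: vertices `V` carry a side (`false` = left tree,
`true` = right tree) and a depth `≤ n`; edges `E` carry a layer `lay e ∈ {1, …, n+1}`
(`lay e = n+1` meaning a middle edge) and a side (meaningful for tree edges), with endpoint
maps `ep0` (shallower / left endpoint) and `ep1` (deeper / right endpoint).  A tree edge of
layer `j` joins a vertex of depth `j−1` to one of depth `j` on its own side; a middle edge
joins a left leaf to a right leaf.  Every vertex of depth `< n` has exactly two child edges,
every vertex of depth `≥ 1` has exactly one parent tree edge, and every leaf is incident to
exactly two middle edges; `s` and `t` are the unique roots of the two trees.  All edges have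
weight 1.  The walk space is `EuclideanSpace ℂ (E ⊕ Bool)` (`Sum.inr false = ss'`,
`Sum.inr true = t't`); part `A` consists of left vertices of even depth and right vertices of
odd depth, part `B` of the remaining vertices.  `R_A` is the unitary acting as `−1` on
`span{ψ_u : u ∈ A}` and as the identity on its orthogonal complement, specified here by these
defining properties (similarly `R_B`).

Write `amp b j` for the amplitude of `v₃` on layer `j` of side `b`.  A vertex of
`A` at depth `2m` (left) or `2m+1` (right) meets one edge of amplitude `(−1/2)^m` above it (the
dangling edge `ss'` for `s`) and two edges of amplitude `(−1/2)^(m+1)` below it, so `ψ_u` is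
orthogonal to `|ss'⟩ + v₃`.  Every edge has exactly one endpoint `u ∈ B`, and its amplitude is
`amp (side u) (depth u)`; hence `v₃ + |t't⟩ = ∑_{u ∈ B} amp (side u) (depth u) • ψ_u`.  The
reflection identities follow because `t ∉ A` and `s ∉ B`.
-/

noncomputable section

namespace Stmt9

variable {V E : Type*} [Fintype V] [Fintype E] [DecidableEq V] [DecidableEq E]

def ket (x : E ⊕ Bool) : EuclideanSpace ℂ (E ⊕ Bool) := EuclideanSpace.single x 1

/-- Vertices of part `A`: left vertices of even depth, right vertices of odd depth. -/
def inA (sideV : V → Bool) (depth : V → ℕ) (u : V) : Prop :=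
  (sideV u = false ∧ Even (depth u)) ∨ (sideV u = true ∧ Odd (depth u))

/-- Vertices of part `B`: left vertices of odd depth, right vertices of even depth. -/
def inB (sideV : V → Bool) (depth : V → ℕ) (u : V) : Prop :=
  (sideV u = false ∧ Odd (depth u)) ∨ (sideV u = true ∧ Even (depth u))

/-- The star state of a vertex `u`: the sum of the basis states of all edges of the extended
graph incident to `u` (all weights being 1). -/
def psi (ep0 ep1 : E → V) (s t : V) (u : V) : EuclideanSpace ℂ (E ⊕ Bool) :=
  (∑ e ∈ Finset.univ.filter (fun e => ep0 e = u), ket (Sum.inl e)) +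
  (∑ e ∈ Finset.univ.filter (fun e => ep1 e = u), ket (Sum.inl e)) +
  (if u = s then ket (Sum.inr false) else 0) +
  (if u = t then ket (Sum.inr true) else 0)

/-- The vector `v₃`: amplitude `(−1/2)^⌈j/2⌉` on layer `j` of the left tree and
`(−1/2)^⌊j/2⌋` on layer `j` of the right tree (`⌊j/2⌋ = j/2` and `⌈j/2⌉ = (j+1)/2` in
natural-number division). -/
def v₃ (lay : E → ℕ) (sideE : E → Bool) : EuclideanSpace ℂ (E ⊕ Bool) :=
  ∑ e : E, ((if sideE e = false then (-(1/2) : ℂ) ^ ((lay e + 1) / 2)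
      else (-(1/2) : ℂ) ^ (lay e / 2)) • ket (Sum.inl e))

omit [Fintype E] in
@[simp]
lemma ket_apply (x y : E ⊕ Bool) : ket x y = if y = x then 1 else 0 := by
  simp [ket]

def amp (b : Bool) (j : ℕ) : ℂ :=
  if b = false then (-(1/2) : ℂ) ^ ((j + 1) / 2) else (-(1/2) : ℂ) ^ (j / 2)

lemma amp_two_mul (b : Bool) (m : ℕ) : amp b (2 * m) = (-(1/2)) ^ m := by
  have h₁ : (2 * m + 1) / 2 = m := by omega
  cases b <;> simp [amp, h₁]

lemma amp_false_two_mul_add_one (m : ℕ) : amp false (2 * m + 1) = (-(1/2)) ^ (m + 1) := by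
  have h₁ : (2 * m + 1 + 1) / 2 = m + 1 := by omega
  simp [amp, h₁]

lemma amp_true_two_mul_add_one (m : ℕ) : amp true (2 * m + 1) = (-(1/2)) ^ m := by
  have h₁ : (2 * m + 1) / 2 = m := by omega
  simp [amp, h₁]

lemma neg_half_pow_add_two_mul_pow_succ (m : ℕ) :
    (-(1/2) : ℂ) ^ m + 2 * (-(1/2)) ^ (m + 1) = 0 := by
  ring

lemma v₃_eq_sum (lay : E → ℕ) (sideE : E → Bool) :
    v₃ lay sideE = ∑ e, amp (sideE e) (lay e) • ket (Sum.inl e) :=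
  rfl

lemma v₃_apply_inl (lay : E → ℕ) (sideE : E → Bool) (e : E) :
    v₃ lay sideE (Sum.inl e) = amp (sideE e) (lay e) := by
  simp [v₃_eq_sum]

lemma v₃_apply_inr (lay : E → ℕ) (sideE : E → Bool) (b : Bool) :
    v₃ lay sideE (Sum.inr b) = 0 := by
  simp [v₃_eq_sum]

section StarState

omit [Fintype V]

variable (ep0 ep1 : E → V) (s t : V)

lemma psi_apply_inl (u : V) (e : E) :
    psi ep0 ep1 s t u (Sum.inl e) =
      (if ep0 e = u then 1 else 0) + (if ep1 e = u then 1 else 0) := by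
  simp [psi, apply_ite (fun v : EuclideanSpace ℂ (E ⊕ Bool) => v (Sum.inl e))]

lemma psi_apply_inr_false (u : V) :
    psi ep0 ep1 s t u (Sum.inr false) = if u = s then 1 else 0 := by
  simp [psi, apply_ite (fun v : EuclideanSpace ℂ (E ⊕ Bool) => v (Sum.inr false))]

lemma psi_apply_inr_true (u : V) :
    psi ep0 ep1 s t u (Sum.inr true) = if u = t then 1 else 0 := by
  simp [psi, apply_ite (fun v : EuclideanSpace ℂ (E ⊕ Bool) => v (Sum.inr true))]

lemma inner_psi_ket (u : V) (x : E ⊕ Bool) :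
    inner ℂ (psi ep0 ep1 s t u) (ket x) = starRingEnd ℂ (psi ep0 ep1 s t u x) := by
  simp [ket, EuclideanSpace.inner_single_right]

lemma inner_psi_v₃ (lay : E → ℕ) (sideE : E → Bool) (u : V) :
    inner ℂ (psi ep0 ep1 s t u) (v₃ lay sideE) =
      (∑ e ∈ Finset.univ.filter (fun e => ep0 e = u), amp (sideE e) (lay e)) +
      (∑ e ∈ Finset.univ.filter (fun e => ep1 e = u), amp (sideE e) (lay e)) := by
  simp only [v₃_eq_sum, inner_sum, inner_smul_right, inner_psi_ket, psi_apply_inl]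
  simp [Finset.sum_filter, mul_add, ← Finset.sum_add_distrib, amp]

lemma inner_psi_ket_add_v₃ (lay : E → ℕ) (sideE : E → Bool) (u : V) :
    inner ℂ (psi ep0 ep1 s t u) (ket (Sum.inr false) + v₃ lay sideE) =
      (if u = s then 1 else 0) +
      (∑ e ∈ Finset.univ.filter (fun e => ep0 e = u), amp (sideE e) (lay e)) +
      (∑ e ∈ Finset.univ.filter (fun e => ep1 e = u), amp (sideE e) (lay e)) := by
  rw [inner_add_right, inner_psi_ket, psi_apply_inr_false, inner_psi_v₃, add_assoc]
  split_ifs <;> simp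

lemma sum_smul_psi_apply_inl (S : Finset V) (c : V → ℂ) (e : E) :
    (∑ u ∈ S, c u • psi ep0 ep1 s t u) (Sum.inl e) =
      (if ep0 e ∈ S then c (ep0 e) else 0) + (if ep1 e ∈ S then c (ep1 e) else 0) := by
  simp [psi_apply_inl, mul_add, Finset.sum_add_distrib]

lemma sum_smul_psi_apply_inr_false (S : Finset V) (c : V → ℂ) :
    (∑ u ∈ S, c u • psi ep0 ep1 s t u) (Sum.inr false) = if s ∈ S then c s else 0 := by
  simp [psi_apply_inr_false]

lemma sum_smul_psi_apply_inr_true (S : Finset V) (c : V → ℂ) :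
    (∑ u ∈ S, c u • psi ep0 ep1 s t u) (Sum.inr true) = if t ∈ S then c t else 0 := by
  simp [psi_apply_inr_true]

end StarState

section Bipartition

omit [Fintype V] [DecidableEq V]

instance (sideV : V → Bool) (depth : V → ℕ) : DecidablePred (inB sideV depth) :=
  fun u => by unfold inB; infer_instance

lemma not_inA_of_right_root {sideV : V → Bool} {depth : V → ℕ} {t : V}
    (ht : sideV t = true ∧ depth t = 0) : ¬ inA sideV depth t := by
  simp [inA, ht]

lemma not_inB_of_left_root {sideV : V → Bool} {depth : V → ℕ} {s : V}
    (hs : sideV s = false ∧ depth s = 0) : ¬ inB sideV depth s := by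
  simp [inB, hs]

end Bipartition

def TreeEdgesLayered (n : ℕ) (sideV : V → Bool) (depth : V → ℕ) (lay : E → ℕ) (sideE : E → Bool)
    (ep0 ep1 : E → V) : Prop :=
  ∀ e, lay e ≤ n → sideV (ep0 e) = sideE e ∧ depth (ep0 e) = lay e - 1 ∧
    sideV (ep1 e) = sideE e ∧ depth (ep1 e) = lay e

def MiddleEdgesWelded (n : ℕ) (sideV : V → Bool) (depth : V → ℕ) (lay : E → ℕ)
    (ep0 ep1 : E → V) : Prop :=
  ∀ e, lay e = n + 1 → sideV (ep0 e) = false ∧ depth (ep0 e) = n ∧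
    sideV (ep1 e) = true ∧ depth (ep1 e) = n

section WeldedTree

variable {n : ℕ} {sideV : V → Bool} {depth : V → ℕ} {lay : E → ℕ} {sideE : E → Bool}
  {ep0 ep1 : E → V}

section EdgeSums

omit [Fintype V] [DecidableEq E]

lemma sum_amp_child_edges (hlay : ∀ e, 1 ≤ lay e ∧ lay e ≤ n + 1)
    (htree : TreeEdgesLayered n sideV depth lay sideE ep0 ep1)
    (hmid : MiddleEdgesWelded n sideV depth lay ep0 ep1)
    {u : V} (hu : depth u < n) (hcard : (Finset.univ.filter fun e => ep0 e = u).card = 2) :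
    ∑ e ∈ Finset.univ.filter (fun e => ep0 e = u), amp (sideE e) (lay e)
      = 2 * amp (sideV u) (depth u + 1) := by
  have hconst : ∀ e ∈ Finset.univ.filter (fun e => ep0 e = u),
      amp (sideE e) (lay e) = amp (sideV u) (depth u + 1) := by
    intro e he
    obtain rfl := (Finset.mem_filter.mp he).2
    have hle : lay e ≤ n := by
      by_contra h
      have := (hmid e (by have := (hlay e).2; omega)).2.1
      omega
    obtain ⟨hside, hdepth, -, -⟩ := htree e hle
    rw [hside, hdepth, Nat.sub_add_cancel (hlay e).1]
  rw [Finset.sum_congr rfl hconst, Finset.sum_const, hcard, two_nsmul, two_mul]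

lemma sum_amp_child_edges_of_right_leaf (hlay : ∀ e, 1 ≤ lay e ∧ lay e ≤ n + 1)
    (htree : TreeEdgesLayered n sideV depth lay sideE ep0 ep1)
    (hmid : MiddleEdgesWelded n sideV depth lay ep0 ep1)
    {u : V} (hside : sideV u = true) (hdepth : depth u = n) :
    ∑ e ∈ Finset.univ.filter (fun e => ep0 e = u), amp (sideE e) (lay e) = 0 := by
  refine Finset.sum_eq_zero fun e he => ?_
  obtain rfl := (Finset.mem_filter.mp he).2
  by_cases hle : lay e ≤ n
  · have := (htree e hle).2.1
    have := (hlay e).1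
    omega
  · have := (hmid e (by have := (hlay e).2; omega)).1
    simp_all

lemma sum_amp_parent_edges
    (htree : TreeEdgesLayered n sideV depth lay sideE ep0 ep1)
    {u : V} (hcard : (Finset.univ.filter fun e => lay e ≤ n ∧ ep1 e = u).card = 1) :
    ∑ e ∈ Finset.univ.filter (fun e => lay e ≤ n ∧ ep1 e = u), amp (sideE e) (lay e)
      = amp (sideV u) (depth u) := by
  obtain ⟨e, he⟩ := Finset.card_eq_one.mp hcard
  obtain ⟨hle, rfl⟩ := (Finset.mem_filter.mp (he ▸ Finset.mem_singleton_self e)).2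
  obtain ⟨-, -, hside, hdepth⟩ := htree e hle
  rw [he, Finset.sum_singleton, hside, hdepth]

lemma sum_amp_parent_edges_of_root (hlay : ∀ e, 1 ≤ lay e ∧ lay e ≤ n + 1)
    (htree : TreeEdgesLayered n sideV depth lay sideE ep0 ep1)
    {u : V} (hu : depth u = 0) :
    ∑ e ∈ Finset.univ.filter (fun e => lay e ≤ n ∧ ep1 e = u), amp (sideE e) (lay e) = 0 := by
  refine Finset.sum_eq_zero fun e he => ?_
  obtain ⟨hle, rfl⟩ := (Finset.mem_filter.mp he).2
  have := (htree e hle).2.2.2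
  have := (hlay e).1
  omega

lemma sum_amp_middle_edges {k : ℕ} (hk : n = 2 * k + 1) {u : V}
    (hcard : (Finset.univ.filter fun e => lay e = n + 1 ∧ ep1 e = u).card = 2) :
    ∑ e ∈ Finset.univ.filter (fun e => lay e = n + 1 ∧ ep1 e = u), amp (sideE e) (lay e)
      = 2 * (-(1/2)) ^ (k + 1) := by
  have hconst : ∀ e ∈ Finset.univ.filter (fun e => lay e = n + 1 ∧ ep1 e = u),
      amp (sideE e) (lay e) = (-(1/2)) ^ (k + 1) := by
    intro e he
    rw [(Finset.mem_filter.mp he).2.1, hk, ← amp_two_mul (sideE e), mul_add_one]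
  rw [Finset.sum_congr rfl hconst, Finset.sum_const, hcard, two_nsmul, two_mul]

lemma sum_amp_middle_edges_of_not_right_leaf
    (hmid : MiddleEdgesWelded n sideV depth lay ep0 ep1)
    {u : V} (hu : ¬(sideV u = true ∧ depth u = n)) :
    ∑ e ∈ Finset.univ.filter (fun e => lay e = n + 1 ∧ ep1 e = u), amp (sideE e) (lay e) = 0 := by
  refine Finset.sum_eq_zero fun e he => ?_
  obtain ⟨hlay, rfl⟩ := (Finset.mem_filter.mp he).2
  exact absurd (hmid e hlay).2.2 hu

lemma sum_amp_eq_tree_add_middle (hlay : ∀ e, 1 ≤ lay e ∧ lay e ≤ n + 1) (ep : E → V) (u : V) :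
    ∑ e ∈ Finset.univ.filter (fun e => ep e = u), amp (sideE e) (lay e)
      = ∑ e ∈ Finset.univ.filter (fun e => lay e ≤ n ∧ ep e = u), amp (sideE e) (lay e)
        + ∑ e ∈ Finset.univ.filter (fun e => lay e = n + 1 ∧ ep e = u),
            amp (sideE e) (lay e) := by
  simp only [Finset.sum_filter, ← Finset.sum_add_distrib]
  refine Finset.sum_congr rfl fun e _ => ?_
  have := (hlay e).2
  by_cases h : lay e ≤ n <;> by_cases h' : ep e = u <;> simp [h, h'] <;> omega

omit [Fintype E] [DecidableEq V] in
lemma amp_inB_endpoint (hn : Odd n) (hlay : ∀ e, 1 ≤ lay e ∧ lay e ≤ n + 1)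
    (htree : TreeEdgesLayered n sideV depth lay sideE ep0 ep1)
    (hmid : MiddleEdgesWelded n sideV depth lay ep0 ep1) (e : E) :
    (if inB sideV depth (ep0 e) then amp (sideV (ep0 e)) (depth (ep0 e)) else 0) +
      (if inB sideV depth (ep1 e) then amp (sideV (ep1 e)) (depth (ep1 e)) else 0)
      = amp (sideE e) (lay e) := by
  by_cases hle : lay e ≤ n
  · obtain ⟨h0s, h0d, h1s, h1d⟩ := htree e hle
    obtain ⟨j, hj⟩ : ∃ j, lay e = j + 1 := ⟨lay e - 1, by have := (hlay e).1; omega⟩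
    have hsucc : ∀ m, 2 * m + 1 + 1 = 2 * (m + 1) := fun m => by ring
    simp only [inB, h0s, h0d, h1s, h1d, hj, Nat.add_sub_cancel]
    rcases Nat.even_or_odd' j with ⟨m, rfl | rfl⟩ <;> cases sideE e <;>
      simp [parity_simps, hsucc, amp_two_mul, amp_false_two_mul_add_one, amp_true_two_mul_add_one]
  · have hlay' : lay e = n + 1 := by have := (hlay e).2; omega
    obtain ⟨h0s, h0d, h1s, h1d⟩ := hmid e hlay'
    obtain ⟨k, rfl⟩ := hn
    rw [hlay', show 2 * k + 1 + 1 = 2 * (k + 1) by ring, amp_two_mul]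
    simp [inB, h0s, h0d, h1s, h1d, parity_simps, amp_false_two_mul_add_one]

end EdgeSums

omit [Fintype V] in
lemma inner_psi_ket_add_v₃_eq_zero_of_left (hn : Odd n) (hdepth : ∀ u, depth u ≤ n)
    (hlay : ∀ e, 1 ≤ lay e ∧ lay e ≤ n + 1)
    (htree : TreeEdgesLayered n sideV depth lay sideE ep0 ep1)
    (hmid : MiddleEdgesWelded n sideV depth lay ep0 ep1)
    {s t : V} (hs : sideV s = false ∧ depth s = 0)
    (hroot : ∀ u, depth u = 0 → sideV u = false → u = s)
    (hchild : ∀ u, depth u < n → (Finset.univ.filter fun e => ep0 e = u).card = 2)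
    (hparent : ∀ u, 1 ≤ depth u →
        (Finset.univ.filter fun e => lay e ≤ n ∧ ep1 e = u).card = 1)
    {u : V} (hside : sideV u = false) (heven : Even (depth u)) :
    inner ℂ (psi ep0 ep1 s t u) (ket (Sum.inr false) + v₃ lay sideE) = 0 := by
  obtain ⟨m, hm⟩ := heven
  have hlt : depth u < n := lt_of_le_of_ne (hdepth u) fun h => by
    rw [← Nat.not_even_iff_odd] at hn; exact hn ⟨m, h ▸ hm⟩
  have hup : (if u = s then 1 else 0) +
      ∑ e ∈ Finset.univ.filter (fun e => lay e ≤ n ∧ ep1 e = u), amp (sideE e) (lay e)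
        = (-(1/2) : ℂ) ^ m := by
    rcases Nat.eq_zero_or_pos m with rfl | hpos
    · rw [if_pos (hroot u (by omega) hside), sum_amp_parent_edges_of_root hlay htree (by omega)]
      simp
    · have hne : u ≠ s := fun h => by subst h; omega
      rw [if_neg hne, sum_amp_parent_edges htree (hparent u (by omega)), zero_add, hside,
        hm, ← two_mul, amp_two_mul]
  rw [inner_psi_ket_add_v₃, sum_amp_eq_tree_add_middle hlay ep1,
    sum_amp_middle_edges_of_not_right_leaf hmid (by simp [hside]),
    sum_amp_child_edges hlay htree hmid hlt (hchild u hlt), hside, hm, ← two_mul,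
    amp_false_two_mul_add_one]
  linear_combination hup + neg_half_pow_add_two_mul_pow_succ m

omit [Fintype V] in
lemma inner_psi_ket_add_v₃_eq_zero_of_right (hdepth : ∀ u, depth u ≤ n)
    (hlay : ∀ e, 1 ≤ lay e ∧ lay e ≤ n + 1)
    (htree : TreeEdgesLayered n sideV depth lay sideE ep0 ep1)
    (hmid : MiddleEdgesWelded n sideV depth lay ep0 ep1)
    {s t : V} (hs : sideV s = false ∧ depth s = 0)
    (hchild : ∀ u, depth u < n → (Finset.univ.filter fun e => ep0 e = u).card = 2)
    (hparent : ∀ u, 1 ≤ depth u →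
        (Finset.univ.filter fun e => lay e ≤ n ∧ ep1 e = u).card = 1)
    (hmidR : ∀ u, sideV u = true → depth u = n →
        (Finset.univ.filter fun e => lay e = n + 1 ∧ ep1 e = u).card = 2)
    {u : V} (hside : sideV u = true) (hodd : Odd (depth u)) :
    inner ℂ (psi ep0 ep1 s t u) (ket (Sum.inr false) + v₃ lay sideE) = 0 := by
  obtain ⟨m, hm⟩ := hodd
  have hne : u ≠ s := fun h => by simp [h, hs.1] at hside
  rw [inner_psi_ket_add_v₃, if_neg hne, zero_add, sum_amp_eq_tree_add_middle hlay ep1,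
    sum_amp_parent_edges htree (hparent u (by omega)), hside, hm, amp_true_two_mul_add_one,
    ← neg_half_pow_add_two_mul_pow_succ m]
  by_cases hleaf : depth u = n
  · rw [sum_amp_child_edges_of_right_leaf hlay htree hmid hside hleaf,
      sum_amp_middle_edges (k := m) (by omega) (hmidR u hside hleaf)]
    ring
  · have hlt : depth u < n := lt_of_le_of_ne (hdepth u) hleaf
    rw [sum_amp_child_edges hlay htree hmid hlt (hchild u hlt),
      sum_amp_middle_edges_of_not_right_leaf hmid (fun h => hleaf h.2), hside, hm,
      show 2 * m + 1 + 1 = 2 * (m + 1) by ring, amp_two_mul]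
    ring

lemma v₃_add_ket_eq_sum_smul_psi (hn : Odd n) (hlay : ∀ e, 1 ≤ lay e ∧ lay e ≤ n + 1)
    (htree : TreeEdgesLayered n sideV depth lay sideE ep0 ep1)
    (hmid : MiddleEdgesWelded n sideV depth lay ep0 ep1)
    {s t : V} (hs : sideV s = false ∧ depth s = 0) (ht : sideV t = true ∧ depth t = 0) :
    v₃ lay sideE + ket (Sum.inr true) =
      ∑ u ∈ Finset.univ.filter (inB sideV depth), amp (sideV u) (depth u) • psi ep0 ep1 s t u := by
  ext x
  rcases x with e | _ | _
  · simp [sum_smul_psi_apply_inl, v₃_apply_inl, amp_inB_endpoint hn hlay htree hmid e]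
  · simp [sum_smul_psi_apply_inr_false, v₃_apply_inr, inB, hs]
  · rw [sum_smul_psi_apply_inr_true]
    simp [v₃_apply_inr, inB, ht, amp]

lemma v₃_add_ket_mem_span (hn : Odd n) (hlay : ∀ e, 1 ≤ lay e ∧ lay e ≤ n + 1)
    (htree : TreeEdgesLayered n sideV depth lay sideE ep0 ep1)
    (hmid : MiddleEdgesWelded n sideV depth lay ep0 ep1)
    {s t : V} (hs : sideV s = false ∧ depth s = 0) (ht : sideV t = true ∧ depth t = 0) :
    v₃ lay sideE + ket (Sum.inr true) ∈
      Submodule.span ℂ (psi ep0 ep1 s t '' {u | inB sideV depth u}) := by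
  rw [v₃_add_ket_eq_sum_smul_psi hn hlay htree hmid hs ht]
  exact Submodule.sum_mem _ fun u hu => Submodule.smul_mem _ _
    (Submodule.subset_span ⟨u, (Finset.mem_filter.mp hu).2, rfl⟩)

end WeldedTree

theorem welded_v3_reflections_general
    (n : ℕ) (hn : Odd n)
    (sideV : V → Bool) (depth : V → ℕ) (hdepth : ∀ u, depth u ≤ n)
    (lay : E → ℕ) (sideE : E → Bool) (ep0 ep1 : E → V)
    (hlay : ∀ e, 1 ≤ lay e ∧ lay e ≤ n + 1)
    (htree : ∀ e, lay e ≤ n → sideV (ep0 e) = sideE e ∧ depth (ep0 e) = lay e - 1 ∧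
        sideV (ep1 e) = sideE e ∧ depth (ep1 e) = lay e)
    (hmid : ∀ e, lay e = n + 1 → sideV (ep0 e) = false ∧ depth (ep0 e) = n ∧
        sideV (ep1 e) = true ∧ depth (ep1 e) = n)
    (s t : V) (hs : sideV s = false ∧ depth s = 0) (ht : sideV t = true ∧ depth t = 0)
    (hroot : ∀ u, depth u = 0 → (sideV u = false → u = s) ∧ (sideV u = true → u = t))
    (hchild : ∀ u, depth u < n → (Finset.univ.filter fun e => ep0 e = u).card = 2)
    (hparent : ∀ u, 1 ≤ depth u →
        (Finset.univ.filter fun e => lay e ≤ n ∧ ep1 e = u).card = 1)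
    (hmidR : ∀ u, sideV u = true → depth u = n →
        (Finset.univ.filter fun e => lay e = n + 1 ∧ ep1 e = u).card = 2)
    (RA RB : EuclideanSpace ℂ (E ⊕ Bool) →ₗ[ℂ] EuclideanSpace ℂ (E ⊕ Bool))
    (hRAid : ∀ x, (∀ u, inA sideV depth u → (inner ℂ (psi ep0 ep1 s t u) x : ℂ) = 0) → RA x = x)
    (hRBneg : ∀ u, inB sideV depth u → RB (psi ep0 ep1 s t u) = -psi ep0 ep1 s t u)
    (hRBid : ∀ x, (∀ u, inB sideV depth u → (inner ℂ (psi ep0 ep1 s t u) x : ℂ) = 0) → RB x = x) :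
    (∀ u, inA sideV depth u →
        (inner ℂ (psi ep0 ep1 s t u) (ket (Sum.inr false) + v₃ lay sideE) : ℂ) = 0) ∧
    (v₃ lay sideE + ket (Sum.inr true)) ∈
        Submodule.span ℂ (psi ep0 ep1 s t '' {u | inB sideV depth u}) ∧
    RA (ket (Sum.inr false) + v₃ lay sideE + ket (Sum.inr true))
        = ket (Sum.inr false) + v₃ lay sideE + ket (Sum.inr true) ∧
    RB (ket (Sum.inr false) + v₃ lay sideE + ket (Sum.inr true))
        = ket (Sum.inr false) - v₃ lay sideE - ket (Sum.inr true) := by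
  have hA : ∀ u, inA sideV depth u →
      (inner ℂ (psi ep0 ep1 s t u) (ket (Sum.inr false) + v₃ lay sideE) : ℂ) = 0 := by
    rintro u (⟨hside, heven⟩ | ⟨hside, hodd⟩)
    · exact inner_psi_ket_add_v₃_eq_zero_of_left hn hdepth hlay htree hmid hs
        (fun u h => (hroot u h).1) hchild hparent hside heven
    · exact inner_psi_ket_add_v₃_eq_zero_of_right hdepth hlay htree hmid hs hchild hparent
        hmidR hside hodd
  have hB := v₃_add_ket_mem_span hn hlay htree hmid hs ht
  refine ⟨hA, hB, hRAid _ fun u hu => ?_, ?_⟩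
  · rw [inner_add_right, hA u hu, inner_psi_ket, psi_apply_inr_true,
      if_neg fun h : u = t => not_inA_of_right_root ht (h ▸ hu)]
    simp
  have hss : RB (ket (Sum.inr false)) = ket (Sum.inr false) := hRBid _ fun u hu => by
    rw [inner_psi_ket, psi_apply_inr_false, if_neg fun h : u = s => not_inB_of_left_root hs (h ▸ hu)]
    simp
  have hneg : RB (v₃ lay sideE + ket (Sum.inr true)) = -(v₃ lay sideE + ket (Sum.inr true)) :=
    LinearMap.eqOn_span (g := -LinearMap.id) (by rintro _ ⟨u, hu, rfl⟩; exact hRBneg u hu) hB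
  rw [add_assoc, map_add, hss, hneg]
  abel

theorem welded_v3_reflections
    (n : ℕ) (hn : Odd n)
    (sideV : V → Bool) (depth : V → ℕ) (hdepth : ∀ u, depth u ≤ n)
    (lay : E → ℕ) (sideE : E → Bool) (ep0 ep1 : E → V)
    (hlay : ∀ e, 1 ≤ lay e ∧ lay e ≤ n + 1)
    (htree : ∀ e, lay e ≤ n → sideV (ep0 e) = sideE e ∧ depth (ep0 e) = lay e - 1 ∧
        sideV (ep1 e) = sideE e ∧ depth (ep1 e) = lay e)
    (hmid : ∀ e, lay e = n + 1 → sideV (ep0 e) = false ∧ depth (ep0 e) = n ∧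
        sideV (ep1 e) = true ∧ depth (ep1 e) = n)
    (s t : V) (hs : sideV s = false ∧ depth s = 0) (ht : sideV t = true ∧ depth t = 0)
    (hroot : ∀ u, depth u = 0 → (sideV u = false → u = s) ∧ (sideV u = true → u = t))
    (hchild : ∀ u, depth u < n → (Finset.univ.filter fun e => ep0 e = u).card = 2)
    (hparent : ∀ u, 1 ≤ depth u →
        (Finset.univ.filter fun e => lay e ≤ n ∧ ep1 e = u).card = 1)
    (hmidL : ∀ u, sideV u = false → depth u = n →
        (Finset.univ.filter fun e => lay e = n + 1 ∧ ep0 e = u).card = 2)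
    (hmidR : ∀ u, sideV u = true → depth u = n →
        (Finset.univ.filter fun e => lay e = n + 1 ∧ ep1 e = u).card = 2)
    (RA RB : EuclideanSpace ℂ (E ⊕ Bool) →ₗ[ℂ] EuclideanSpace ℂ (E ⊕ Bool))
    (hRAneg : ∀ u, inA sideV depth u → RA (psi ep0 ep1 s t u) = -psi ep0 ep1 s t u)
    (hRAid : ∀ x, (∀ u, inA sideV depth u → (inner ℂ (psi ep0 ep1 s t u) x : ℂ) = 0) → RA x = x)
    (hRBneg : ∀ u, inB sideV depth u → RB (psi ep0 ep1 s t u) = -psi ep0 ep1 s t u)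
    (hRBid : ∀ x, (∀ u, inB sideV depth u → (inner ℂ (psi ep0 ep1 s t u) x : ℂ) = 0) → RB x = x) :
    (∀ u, inA sideV depth u →
        (inner ℂ (psi ep0 ep1 s t u) (ket (Sum.inr false) + v₃ lay sideE) : ℂ) = 0) ∧
    (v₃ lay sideE + ket (Sum.inr true)) ∈
        Submodule.span ℂ (psi ep0 ep1 s t '' {u | inB sideV depth u}) ∧
    RA (ket (Sum.inr false) + v₃ lay sideE + ket (Sum.inr true))
        = ket (Sum.inr false) + v₃ lay sideE + ket (Sum.inr true) ∧
    RB (ket (Sum.inr false) + v₃ lay sideE + ket (Sum.inr true))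
        = ket (Sum.inr false) - v₃ lay sideE - ket (Sum.inr true) :=
  welded_v3_reflections_general n hn sideV depth hdepth lay sideE ep0 ep1 hlay htree hmid s t hs ht
    hroot hchild hparent hmidR RA RB hRAid hRBneg hRBid

end Stmt9
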